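/- Let A₁,…,A_k be bounded operators on H. For every *-polynomial p in k operator variables, ‖p(Ψ_{A₁},…,Ψ_{A_k})‖ ≤ ‖p(Ψ⁺_{A₁},…,Ψ⁺_{A_k})‖. (This is the corollary 'ψ₊ majorizes ψ̃' in the discrete case, obtained by combining the compression lemma ‖P₊ A P₊‖ = ‖A‖ for shift-commuting A with the identity V*^m p(Ψ⁺) V^m = P₊ p(Ψ) P₊.) -/

import Mathlib

/-!
`Ψ_A` and its adjoint are weighted shifts of `ℓ²(ℤ, H)`, so `p(Ψ)` commutes with the bilateral
shift `W = Ψ_1`, an isometry. A word of length at most `d` in the letters `Ψ_{Aᵢ}, Ψ_{Aᵢ}*`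
lowers supports by at most `d`, so on vectors vanishing below `d` every intermediate vector lies
in the range of `P₊`, and there `p(Ψ⁺)` agrees with `p(Ψ)`. A power of `W` moves any vector with
support bounded below into that region without changing `‖p(Ψ) ξ‖`, and such vectors are dense.
-/

open MeasureTheory ContinuousLinearMap

/-- Evaluation of a word in formal letters `x i` (`b = false`) and `x i *` (`b = true`)
at the tuple of operators `T`. -/
noncomputable def evalWord {k : ℕ} {H : Type*} [NormedAddCommGroup H] [InnerProductSpace ℂ H]
    [CompleteSpace H] (T : Fin k → H →L[ℂ] H) : List (Fin k × Bool) → H →L[ℂ] H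
  | [] => 1
  | (i, b) :: w => (if b then adjoint (T i) else T i) * evalWord T w

/-- A *-polynomial in `k` operator variables is a finite ℂ-linear combination of words;
`evalPoly T p` is its evaluation at the operators `T 0, ..., T (k-1)`. -/
noncomputable def evalPoly {k : ℕ} {H : Type*} [NormedAddCommGroup H] [InnerProductSpace ℂ H]
    [CompleteSpace H] (T : Fin k → H →L[ℂ] H) (p : List (ℂ × List (Fin k × Bool))) : H →L[ℂ] H :=
  (p.map fun cw => cw.1 • evalWord T cw.2).sum

/-- The degree of a *-polynomial: the maximal length of a word occurring in it. -/
def polyDegree {k : ℕ} (p : List (ℂ × List (Fin k × Bool))) : ℕ :=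
  (p.map fun cw => cw.2.length).foldr max 0

open Set
open scoped lp ENNReal

section Compression

variable {𝕜 E : Type*} [NontriviallyNormedField 𝕜] [SeminormedAddCommGroup E] [NormedSpace 𝕜 E]

theorem ContinuousLinearMap.opNorm_le_of_dense_of_isometry {X Y : E →L[𝕜] E} {D : Set E}
    (hD : Dense D)
    (h : ∀ ξ ∈ D, ∃ V : E →L[𝕜] E, (∀ η, ‖V η‖ = ‖η‖) ∧ Commute X V ∧ X (V ξ) = Y (V ξ)) :
    ‖X‖ ≤ ‖Y‖ := by
  refine opNorm_le_bound _ (norm_nonneg _) fun ξ => ?_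
  refine hD.induction (P := fun ξ => ‖X ξ‖ ≤ ‖Y‖ * ‖ξ‖) (fun ξ hξ => ?_)
    (isClosed_le X.continuous.norm (continuous_const.mul continuous_norm)) ξ
  obtain ⟨V, hV, hXV, hagree⟩ := h ξ hξ
  calc ‖X ξ‖ = ‖V (X ξ)‖ := (hV _).symm
    _ = ‖Y (V ξ)‖ := by
      rw [← mul_apply_eq_comp V X, ← hXV.eq, mul_apply_eq_comp, hagree]
    _ ≤ ‖Y‖ * ‖V ξ‖ := le_opNorm _ _
    _ = ‖Y‖ * ‖ξ‖ := by rw [hV]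

end Compression

section Words

variable {H : Type*} [NormedAddCommGroup H] [InnerProductSpace ℂ H] [CompleteSpace H] {k : ℕ}

noncomputable def evalLetter (T : Fin k → H →L[ℂ] H) (a : Fin k × Bool) : H →L[ℂ] H :=
  if a.2 then adjoint (T a.1) else T a.1

theorem evalWord_cons (T : Fin k → H →L[ℂ] H) (a : Fin k × Bool) (w : List (Fin k × Bool)) :
    evalWord T (a :: w) = evalLetter T a * evalWord T w :=
  rfl

theorem evalPoly_cons (T : Fin k → H →L[ℂ] H) (cw : ℂ × List (Fin k × Bool))
    (p : List (ℂ × List (Fin k × Bool))) :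
    evalPoly T (cw :: p) = cw.1 • evalWord T cw.2 + evalPoly T p := by
  simp [evalPoly]

theorem length_le_polyDegree (p : List (ℂ × List (Fin k × Bool))) :
    ∀ cw ∈ p, cw.2.length ≤ polyDegree p := by
  induction p with
  | nil => simp
  | cons c q ih =>
    intro cw hcw
    simp only [polyDegree, List.map_cons, List.foldr_cons] at ih ⊢
    rcases List.mem_cons.mp hcw with rfl | h
    · exact le_max_left _ _
    · exact (ih cw h).trans (le_max_right _ _)

theorem commute_evalWord {T : Fin k → H →L[ℂ] H} {S : H →L[ℂ] H}
    (h : ∀ a, Commute (evalLetter T a) S) (w : List (Fin k × Bool)) :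
    Commute (evalWord T w) S := by
  induction w with
  | nil => exact Commute.one_left S
  | cons a w ih => exact evalWord_cons T a w ▸ (h a).mul_left ih

theorem commute_evalPoly {T : Fin k → H →L[ℂ] H} {S : H →L[ℂ] H}
    (h : ∀ a, Commute (evalLetter T a) S) (p : List (ℂ × List (Fin k × Bool))) :
    Commute (evalPoly T p) S := by
  refine Commute.list_sum_left _ _ fun x hx => ?_
  obtain ⟨cw, -, rfl⟩ := List.mem_map.1 hx
  exact (commute_evalWord h cw.2).smul_left cw.1

theorem evalLetter_conj {P : H →L[ℂ] H} (hP : IsSelfAdjoint P) (T : Fin k → H →L[ℂ] H)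
    (a : Fin k × Bool) : evalLetter (fun i => P * T i * P) a = P * evalLetter T a * P := by
  unfold evalLetter
  split_ifs
  · rw [← star_eq_adjoint, ← star_eq_adjoint, star_mul, star_mul, hP.star_eq, mul_assoc]
  · rfl

-- `S d`: vectors on which `d` more letters of `T` can act before leaving the region where the
-- letters of `T'` and `T` agree.
variable {T T' : Fin k → H →L[ℂ] H} {S : ℕ → Set H}

theorem mapsTo_evalWord (hmaps : ∀ a d, MapsTo (evalLetter T a) (S (d + 1)) (S d))
    (w : List (Fin k × Bool)) (d : ℕ) : MapsTo (evalWord T w) (S (d + w.length)) (S d) := by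
  induction w generalizing d with
  | nil => exact fun ξ hξ => hξ
  | cons a w ih =>
    intro ξ hξ
    rw [evalWord_cons, mul_apply_eq_comp]
    exact hmaps a d (ih (d + 1) (by simpa [add_assoc, add_comm 1] using hξ))

theorem eqOn_evalWord (hS : Antitone S) (hmaps : ∀ a d, MapsTo (evalLetter T a) (S (d + 1)) (S d))
    (hagree : ∀ a, EqOn (evalLetter T' a) (evalLetter T a) (S 1)) (w : List (Fin k × Bool)) :
    EqOn (evalWord T' w) (evalWord T w) (S w.length) := by
  induction w with
  | nil => exact fun _ _ => rfl
  | cons a w ih =>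
    intro ξ hξ
    have hw : evalWord T w ξ ∈ S 1 := mapsTo_evalWord hmaps w 1 (by simpa [add_comm] using hξ)
    rw [evalWord_cons, evalWord_cons, mul_apply_eq_comp, mul_apply_eq_comp,
      ih (hS (Nat.le_succ _) hξ), hagree a hw]

theorem eqOn_evalPoly (hS : Antitone S) (hmaps : ∀ a d, MapsTo (evalLetter T a) (S (d + 1)) (S d))
    (hagree : ∀ a, EqOn (evalLetter T' a) (evalLetter T a) (S 1))
    (p : List (ℂ × List (Fin k × Bool))) {d : ℕ} (hd : ∀ cw ∈ p, cw.2.length ≤ d) :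
    EqOn (evalPoly T' p) (evalPoly T p) (S d) := by
  induction p with
  | nil => exact fun _ _ => rfl
  | cons cw p ih =>
    intro ξ hξ
    rw [evalPoly_cons, evalPoly_cons, add_apply, add_apply, smul_apply, smul_apply,
      eqOn_evalWord hS hmaps hagree cw.2 (hS (hd cw List.mem_cons_self) hξ),
      ih (fun c hc => hd c (List.mem_cons_of_mem _ hc)) hξ]

end Words

section VanishingBelow

variable (E : ℤ → Type*) [∀ n, NormedAddCommGroup (E n)] (p : ℝ≥0∞)

def vanishingBelow (d : ℤ) : Set (lp E p) :=
  {ξ | ∀ n < d, ξ n = 0}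

theorem antitone_vanishingBelow : Antitone (vanishingBelow E p) :=
  fun _ _ hd _ hξ n hn => hξ n (hn.trans_le hd)

theorem dense_iUnion_vanishingBelow [Fact (1 ≤ p)] (hp : p ≠ ∞) :
    Dense (⋃ d, vanishingBelow E p d) := by
  intro ξ
  refine mem_closure_of_tendsto (lp.hasSum_single hp ξ) (Filter.Eventually.of_forall fun s => ?_)
  obtain ⟨d, hd⟩ := s.bddBelow
  refine mem_iUnion.2 ⟨d, fun n hn => ?_⟩
  rw [lp.coeFn_sum, Finset.sum_apply]
  exact Finset.sum_eq_zero fun i hi => lp.single_apply_ne p i _ (hn.trans_le (hd hi)).ne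

end VanishingBelow

section WeightedShifts

variable {H : Type*} [NormedAddCommGroup H] [InnerProductSpace ℂ H]

def IsWeightedShift (S : ℓ²(ℤ, H) →L[ℂ] ℓ²(ℤ, H)) (B : H →L[ℂ] H) (j : ℤ) : Prop :=
  ∀ ξ n, S ξ n = B (ξ (n - j))

variable {S S' : ℓ²(ℤ, H) →L[ℂ] ℓ²(ℤ, H)} {B B' : H →L[ℂ] H} {j j' : ℤ}

namespace IsWeightedShift

theorem apply_single (hS : IsWeightedShift S B j) (n : ℤ) (x : H) :
    S (lp.single 2 n x) = lp.single 2 (n + j) (B x) := by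
  ext m
  rw [hS, lp.single_apply, lp.single_apply]
  by_cases h : m = n + j
  · subst h; simp
  · rw [Pi.single_eq_of_ne h, Pi.single_eq_of_ne (by omega), map_zero]

theorem adjoint [CompleteSpace H] (hS : IsWeightedShift S B j) :
    IsWeightedShift (ContinuousLinearMap.adjoint S) (ContinuousLinearMap.adjoint B) (-j) := by
  intro η n
  refine ext_inner_left ℂ fun x => ?_
  calc inner ℂ x (S.adjoint η n) = inner ℂ (lp.single 2 n x) (S.adjoint η) :=
        (lp.inner_single_left (𝕜 := ℂ) (G := fun _ : ℤ => H) n x _).symm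
    _ = inner ℂ x (B.adjoint (η (n - -j))) := by
      rw [adjoint_inner_right, hS.apply_single, lp.inner_single_left, adjoint_inner_right,
        sub_neg_eq_add]

theorem mapsTo_vanishingBelow (hS : IsWeightedShift S B j) (d : ℤ) :
    MapsTo S (vanishingBelow _ 2 d) (vanishingBelow _ 2 (d + j)) := fun ξ hξ n hn => by
  rw [hS, hξ _ (by omega), map_zero]

theorem commute (hS : IsWeightedShift S B j) (hS' : IsWeightedShift S' B' j')
    (hB : Commute B B') : Commute S S' := by
  ext ξ n
  simp only [mul_apply_eq_comp, hS _ _, hS' _ _, sub_right_comm n j' j]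
  exact DFunLike.congr_fun hB.eq _

theorem norm_apply [CompleteSpace H] (hS : IsWeightedShift S 1 j) (ξ : ℓ²(ℤ, H)) :
    ‖S ξ‖ = ‖ξ‖ := by
  refine (norm_map_iff_adjoint_comp_self S).2 ?_ ξ
  ext η n
  rw [comp_apply, hS.adjoint, hS, adjoint_one]
  simp

theorem pow (hS : IsWeightedShift S 1 1) (m : ℕ) : IsWeightedShift (S ^ m) 1 m := by
  induction m with
  | zero => intro ξ n; simp
  | succ m ih =>
    intro ξ n
    rw [pow_succ', mul_apply_eq_comp, hS, ih]
    simp [sub_sub, add_comm]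

end IsWeightedShift

end WeightedShifts

section CompressedPolynomial

variable {H : Type*} [NormedAddCommGroup H] [InnerProductSpace ℂ H] {k : ℕ}
  {A : Fin k → H →L[ℂ] H} {T : Fin k → ℓ²(ℤ, H) →L[ℂ] ℓ²(ℤ, H)} {P : ℓ²(ℤ, H) →L[ℂ] ℓ²(ℤ, H)}

theorem apply_eq_self_of_apply_eq_ite (hP : ∀ ξ n, P ξ n = if 0 ≤ n then ξ n else 0)
    {ξ : ℓ²(ℤ, H)} (hξ : ξ ∈ vanishingBelow _ 2 0) : P ξ = ξ := by
  ext n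
  rw [hP]
  split_ifs with h
  · rfl
  · exact (hξ n (not_le.1 h)).symm

variable [CompleteSpace H]

theorem isSelfAdjoint_of_apply_eq_ite (hP : ∀ ξ n, P ξ n = if 0 ≤ n then ξ n else 0) :
    IsSelfAdjoint P := by
  refine ((eq_adjoint_iff P P).2 fun ξ η => ?_).symm
  rw [lp.inner_eq_tsum, lp.inner_eq_tsum]
  refine tsum_congr fun n => ?_
  rw [hP, hP]
  split_ifs <;> simp

theorem isWeightedShift_evalLetter (hT : ∀ i, IsWeightedShift (T i) (A i) 1) (a : Fin k × Bool) :
    IsWeightedShift (evalLetter T a) (evalLetter A a) (if a.2 then -1 else 1) := by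
  rcases a with ⟨i, _ | _⟩
  · exact hT i
  · exact (hT i).adjoint

theorem mapsTo_evalLetter (hT : ∀ i, IsWeightedShift (T i) (A i) 1) (a : Fin k × Bool) (d : ℕ) :
    MapsTo (evalLetter T a) (vanishingBelow _ 2 ((d + 1 : ℕ) : ℤ)) (vanishingBelow _ 2 (d : ℤ)) :=
  ((isWeightedShift_evalLetter hT a).mapsTo_vanishingBelow _).mono_right
    (antitone_vanishingBelow _ _ (by split_ifs <;> omega))

theorem eqOn_evalPoly_compress (hT : ∀ i, IsWeightedShift (T i) (A i) 1)
    (hP : ∀ ξ n, P ξ n = if 0 ≤ n then ξ n else 0) (p : List (ℂ × List (Fin k × Bool))) :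
    EqOn (evalPoly (fun i => P * T i * P) p) (evalPoly T p)
      (vanishingBelow _ 2 (polyDegree p : ℤ)) := by
  refine eqOn_evalPoly (S := fun d : ℕ => vanishingBelow _ 2 (d : ℤ))
    (fun _ _ hd => antitone_vanishingBelow _ _ (Nat.cast_le.2 hd)) (mapsTo_evalLetter hT)
    (fun a ξ hξ => ?_) p (length_le_polyDegree p)
  have hPfix {η : ℓ²(ℤ, H)} (hη : η ∈ vanishingBelow _ 2 (0 : ℕ)) : P η = η :=
    apply_eq_self_of_apply_eq_ite hP (by simpa using hη)
  rw [evalLetter_conj (isSelfAdjoint_of_apply_eq_ite hP), mul_apply_eq_comp, mul_apply_eq_comp,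
    hPfix (antitone_vanishingBelow _ _ (by simp) hξ), hPfix (mapsTo_evalLetter hT a 0 hξ)]

end CompressedPolynomial

/-- For bounded operators `A₁,…,A_k` on `H` and every *-polynomial `p`,
`‖p(Ψ_{A₁},…,Ψ_{A_k})‖ ≤ ‖p(Ψ⁺_{A₁},…,Ψ⁺_{A_k})‖`, where `(Ψ_A ξ)(n) = A(ξ(n−1))` on
`ℓ²(ℤ,H)`, `Ψ⁺_A = P₊ Ψ_A P₊`, and `P₊` projects onto `{ξ : ξ(n) = 0 for n < 0}`. -/
theorem stmt2 {H : Type} [NormedAddCommGroup H] [InnerProductSpace ℂ H] [CompleteSpace H]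
    {k : ℕ} (A : Fin k → H →L[ℂ] H)
    (Pplus : lp (fun _ : ℤ => H) 2 →L[ℂ] lp (fun _ : ℤ => H) 2)
    (hP : ∀ (ξ : lp (fun _ : ℤ => H) 2) (n : ℤ), (Pplus ξ) n = if 0 ≤ n then ξ n else 0)
    (Ψ : (H →L[ℂ] H) → lp (fun _ : ℤ => H) 2 →L[ℂ] lp (fun _ : ℤ => H) 2)
    (hΨ : ∀ (B : H →L[ℂ] H) (ξ : lp (fun _ : ℤ => H) 2) (n : ℤ), (Ψ B ξ) n = B (ξ (n - 1)))
    (p : List (ℂ × List (Fin k × Bool))) :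
    ‖evalPoly (fun i => Ψ (A i)) p‖ ≤ ‖evalPoly (fun i => Pplus * Ψ (A i) * Pplus) p‖ := by
  have hT : ∀ i, IsWeightedShift (Ψ (A i)) (A i) 1 := fun i => hΨ (A i)
  refine opNorm_le_of_dense_of_isometry (dense_iUnion_vanishingBelow _ 2 (by simp)) ?_
  intro ξ hξ
  obtain ⟨N, hN⟩ := mem_iUnion.1 hξ
  set m := (polyDegree p - N).toNat
  have hW : IsWeightedShift (Ψ 1 ^ m) 1 m := IsWeightedShift.pow (hΨ 1) m
  refine ⟨Ψ 1 ^ m, hW.norm_apply,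
    commute_evalPoly (fun a => (isWeightedShift_evalLetter hT a).commute hW (.one_right _)) p,
    (eqOn_evalPoly_compress hT hP p ?_).symm⟩
  exact antitone_vanishingBelow _ _ (by omega) (hW.mapsTo_vanishingBelow N hN)
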